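/- arXiv:1905.01321 — 8 statements merged into one kernel-verified Lean document; each statement's English description precedes it below -/
import Mathlib

section
/- Let F be a field, n ≥ 1, A an n×n matrix over F, v ∈ F^n a column vector, and φ ∈ (F^n)^* a row vector. Then for every integer k ≥ 1, c_k(A + v⊗φ) = c_k(A) + Σ_{j=0}^{k-1} (−1)^j c_{k−1−j}(A) · (φ A^j v). -/
open Matrix Finset Polynomial

/-- `principalMinorSum B k` is `c_k(B)`: the sum of all `k × k` principal minors
of the square matrix `B`. -/
noncomputable def principalMinorSum {F : Type*} [Field F] {n : ℕ}
    (B : Matrix (Fin n) (Fin n) F) (k : ℕ) : F :=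
  ∑ s ∈ Finset.powersetCard k (Finset.univ : Finset (Fin n)),
    (B.submatrix (fun i : {x // x ∈ s} => (i : Fin n))
      (fun i : {x // x ∈ s} => (i : Fin n))).det

namespace PMSAux

variable {R : Type*} [CommRing R] {n : ℕ}

noncomputable def pms (B : Matrix (Fin n) (Fin n) R) (k : ℕ) : R :=
  ∑ s ∈ Finset.powersetCard k (Finset.univ : Finset (Fin n)),
    (B.submatrix (fun i : {x // x ∈ s} => (i : Fin n))
      (fun i : {x // x ∈ s} => (i : Fin n))).det

lemma pms_zero (B : Matrix (Fin n) (Fin n) R) : pms B 0 = 1 := by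
  simp [pms, Finset.powersetCard_zero]

lemma pms_of_gt (B : Matrix (Fin n) (Fin n) R) {k : ℕ} (hk : n < k) : pms B k = 0 := by
  rw [pms, Finset.powersetCard_eq_empty.mpr (by simpa using hk), Finset.sum_empty]

lemma pms_neg (B : Matrix (Fin n) (Fin n) R) (k : ℕ) : pms (-B) k = (-1) ^ k * pms B k := by
  rw [pms, pms, Finset.mul_sum]
  refine Finset.sum_congr rfl fun s hs => ?_
  have hcard : Fintype.card {x // x ∈ s} = k := by
    rw [Fintype.card_coe]; exact (Finset.mem_powersetCard.mp hs).2
  have : ((-B).submatrix (fun i : {x // x ∈ s} => (i : Fin n))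
      (fun i : {x // x ∈ s} => (i : Fin n))) =
      -(B.submatrix (fun i : {x // x ∈ s} => (i : Fin n))
        (fun i : {x // x ∈ s} => (i : Fin n))) := rfl
  rw [this, Matrix.det_neg, hcard]

lemma pms_map {S : Type*} [CommRing S] (f : R →+* S) (B : Matrix (Fin n) (Fin n) R) (k : ℕ) :
    pms (B.map f) k = f (pms B k) := by
  rw [pms, pms, map_sum]
  refine Finset.sum_congr rfl fun s _ => ?_
  rw [f.map_det]
  rfl

end PMSAux

namespace PMSAux
variable {R : Type*} [CommRing R] {n : ℕ}

lemma det_piecewise_one (B : Matrix (Fin n) (Fin n) R) (s : Finset (Fin n)) :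
    (Matrix.of (s.piecewise (fun i => B i) (fun i => (1 : Matrix (Fin n) (Fin n) R) i))).det =
      (B.submatrix (fun i : {x // x ∈ s} => (i : Fin n))
        (fun i : {x // x ∈ s} => (i : Fin n))).det := by
  classical
  set P : Matrix (Fin n) (Fin n) R :=
    Matrix.of (s.piecewise (fun i => B i) (fun i => (1 : Matrix (Fin n) (Fin n) R) i)) with hP
  let e : {x // x ∈ s} ⊕ {x // ¬ x ∈ s} ≃ Fin n := Equiv.sumCompl (· ∈ s)
  rw [← Matrix.det_submatrix_equiv_self e P]
  have : P.submatrix e e = Matrix.fromBlocks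
      (B.submatrix (fun i : {x // x ∈ s} => (i : Fin n)) (fun i : {x // x ∈ s} => (i : Fin n)))
      (B.submatrix (fun i : {x // x ∈ s} => (i : Fin n)) (fun i : {x // ¬ x ∈ s} => (i : Fin n)))
      0 1 := by
    ext i j
    cases i with
    | inl i =>
      cases j with
      | inl j =>
        simp [P, e, Finset.piecewise_eq_of_mem _ _ _ i.2]
      | inr j =>
        simp [P, e, Finset.piecewise_eq_of_mem _ _ _ i.2]
    | inr i =>
      cases j with
      | inl j =>
        have hne : (i : Fin n) ≠ (j : Fin n) := fun h => i.2 (h ▸ j.2)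
        simp [P, e, Finset.piecewise_eq_of_notMem _ _ _ i.2, Matrix.one_apply, hne]
      | inr j =>
        have : ((i : Fin n) = (j : Fin n)) ↔ i = j := Subtype.coe_injective.eq_iff
        simp [P, e, Finset.piecewise_eq_of_notMem _ _ _ i.2, Matrix.one_apply, this]
  rw [this, Matrix.det_fromBlocks_zero₂₁, Matrix.det_one, mul_one]

lemma det_add_smul_one (B : Matrix (Fin n) (Fin n) R) (x : R) :
    (B + x • (1 : Matrix (Fin n) (Fin n) R)).det =
      ∑ k ∈ Finset.range (n + 1), pms B k * x ^ (n - k) := by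
  classical
  have h := (Matrix.detRowAlternating :
      (Fin n → R) [⋀^Fin n]→ₗ[R] R).toMultilinearMap.map_add_univ
      (fun i => B i) (fun i => (x • (1 : Matrix (Fin n) (Fin n) R)) i)
  have hdet : (B + x • (1 : Matrix (Fin n) (Fin n) R)).det =
      ∑ s : Finset (Fin n), (Matrix.of (s.piecewise (fun i => B i)
        (fun i => (x • (1 : Matrix (Fin n) (Fin n) R)) i))).det := h
  rw [hdet]
  have key : ∀ s : Finset (Fin n),
      (Matrix.of (s.piecewise (fun i => B i)
        (fun i => (x • (1 : Matrix (Fin n) (Fin n) R)) i))).det =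
      x ^ (n - s.card) * (B.submatrix (fun i : {x // x ∈ s} => (i : Fin n))
        (fun i : {x // x ∈ s} => (i : Fin n))).det := by
    intro s
    set m : ∀ _ : Fin n, Fin n → R := s.piecewise (fun i => B i)
      (fun i => (1 : Matrix (Fin n) (Fin n) R) i) with hm
    have hpw : s.piecewise (fun i => B i) (fun i => (x • (1 : Matrix (Fin n) (Fin n) R)) i) =
        sᶜ.piecewise (fun i => x • m i) m := by
      funext i
      by_cases hi : i ∈ s
      · rw [Finset.piecewise_eq_of_mem _ _ _ hi,
          Finset.piecewise_eq_of_notMem _ _ _ (by simpa using hi), hm,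
          Finset.piecewise_eq_of_mem _ _ _ hi]
      · rw [Finset.piecewise_eq_of_notMem _ _ _ hi,
          Finset.piecewise_eq_of_mem _ _ _ (by simpa using hi), hm,
          Finset.piecewise_eq_of_notMem _ _ _ hi]
        rfl
    have h2 := (Matrix.detRowAlternating :
        (Fin n → R) [⋀^Fin n]→ₗ[R] R).toMultilinearMap.map_piecewise_smul
        (fun _ => x) m sᶜ
    have hcc : (sᶜ.card : ℕ) = n - s.card := by
      simp [Finset.card_compl]
    calc (Matrix.of (s.piecewise (fun i => B i)
        (fun i => (x • (1 : Matrix (Fin n) (Fin n) R)) i))).det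
        = (Matrix.detRowAlternating : (Fin n → R) [⋀^Fin n]→ₗ[R] R).toMultilinearMap
            (sᶜ.piecewise (fun i => x • m i) m) := by rw [← hpw]; rfl
      _ = (∏ _i ∈ sᶜ, x) • (Matrix.detRowAlternating :
            (Fin n → R) [⋀^Fin n]→ₗ[R] R).toMultilinearMap m := h2
      _ = x ^ (n - s.card) * (Matrix.of m).det := by
            rw [Finset.prod_const, hcc]; rfl
      _ = x ^ (n - s.card) * (B.submatrix (fun i : {x // x ∈ s} => (i : Fin n))
            (fun i : {x // x ∈ s} => (i : Fin n))).det := by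
            rw [hm, det_piecewise_one]
  calc (∑ s : Finset (Fin n), (Matrix.of (s.piecewise (fun i => B i)
        (fun i => (x • (1 : Matrix (Fin n) (Fin n) R)) i))).det)
      = ∑ s ∈ (Finset.univ : Finset (Fin n)).powerset,
          x ^ (n - s.card) * (B.submatrix (fun i : {x // x ∈ s} => (i : Fin n))
            (fun i : {x // x ∈ s} => (i : Fin n))).det := by
        rw [Finset.powerset_univ]
        exact Finset.sum_congr rfl fun s _ => key s
    _ = ∑ k ∈ Finset.range (n + 1), pms B k * x ^ (n - k) := by
        rw [Finset.sum_powerset (s := (Finset.univ : Finset (Fin n)))]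
        simp only [Finset.card_univ, Fintype.card_fin]
        refine Finset.sum_congr rfl fun k _ => ?_
        rw [pms, Finset.sum_mul]
        refine Finset.sum_congr rfl fun s hs => ?_
        rw [(Finset.mem_powersetCard.mp hs).2, mul_comm]

lemma det_add_vecMulVec (M : Matrix (Fin n) (Fin n) R) (v φ : Fin n → R) :
    (M + Matrix.vecMulVec v φ).det =
      M.det + ∑ i, v i * (M.updateRow i φ).det := by
  classical
  have h := (Matrix.detRowAlternating :
      (Fin n → R) [⋀^Fin n]→ₗ[R] R).toMultilinearMap.map_add_eq_map_add_linearDeriv_add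
      (fun i => M i) (fun i => v i • φ)
  have hmm : (fun i => M i) + (fun i => v i • φ) =
      fun i => (M + Matrix.vecMulVec v φ) i := by
    funext i j
    simp [Matrix.vecMulVec_apply, mul_comm]
  rw [hmm] at h
  have h0 : (M + Matrix.vecMulVec v φ).det =
      (Matrix.detRowAlternating : (Fin n → R) [⋀^Fin n]→ₗ[R] R).toMultilinearMap
        (fun i => (M + Matrix.vecMulVec v φ) i) := rfl
  rw [h0, h]
  have hld : (Matrix.detRowAlternating :
      (Fin n → R) [⋀^Fin n]→ₗ[R] R).toMultilinearMap.linearDeriv (fun i => M i)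
        (fun i => v i • φ) = ∑ i, v i * (M.updateRow i φ).det := by
    rw [MultilinearMap.linearDeriv_apply]
    refine Finset.sum_congr rfl fun i _ => ?_
    have : Function.update (fun i => M i) i (v i • φ) =
        fun j => (M.updateRow i (v i • φ)) j := by
      funext j
      by_cases hj : j = i
      · subst hj; simp
      · simp [Function.update_of_ne hj, Matrix.updateRow_ne hj]
    rw [this]
    have : (Matrix.detRowAlternating : (Fin n → R) [⋀^Fin n]→ₗ[R] R).toMultilinearMap
        (fun j => (M.updateRow i (v i • φ)) j) = (M.updateRow i (v i • φ)).det := rfl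
    rw [this, Matrix.det_updateRow_smul]
  rw [hld]
  have hzero : ∀ s ∈ Finset.univ.filter (fun s : Finset (Fin n) => 2 ≤ s.card),
      (Matrix.detRowAlternating : (Fin n → R) [⋀^Fin n]→ₗ[R] R).toMultilinearMap
        (s.piecewise (fun i => v i • φ) (fun i => M i)) = 0 := by
    intro s hs
    have hcard : 2 ≤ s.card := (Finset.mem_filter.mp hs).2
    obtain ⟨a, ha, b, hb, hab⟩ := Finset.one_lt_card.mp hcard
    set m : ∀ _ : Fin n, Fin n → R := s.piecewise (fun _ => φ) (fun i => M i) with hm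
    have hpw : s.piecewise (fun i => v i • φ) (fun i => M i) =
        s.piecewise (fun i => v i • m i) m := by
      funext i
      by_cases hi : i ∈ s
      · rw [Finset.piecewise_eq_of_mem _ _ _ hi, Finset.piecewise_eq_of_mem _ _ _ hi, hm,
          Finset.piecewise_eq_of_mem _ _ _ hi]
      · rw [Finset.piecewise_eq_of_notMem _ _ _ hi, Finset.piecewise_eq_of_notMem _ _ _ hi, hm,
          Finset.piecewise_eq_of_notMem _ _ _ hi]
    rw [hpw, MultilinearMap.map_piecewise_smul]
    have : (Matrix.detRowAlternating : (Fin n → R) [⋀^Fin n]→ₗ[R] R).toMultilinearMap m =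
        (Matrix.of m).det := rfl
    rw [this, Matrix.det_zero_of_row_eq hab, smul_zero]
    show m a = m b
    rw [hm, Finset.piecewise_eq_of_mem _ _ _ ha, Finset.piecewise_eq_of_mem _ _ _ hb]
  rw [Finset.sum_congr rfl hzero, Finset.sum_const, smul_zero, add_zero]
  rfl

lemma sum_v_det_updateRow (M : Matrix (Fin n) (Fin n) R) (v φ : Fin n → R) :
    ∑ i, v i * (M.updateRow i φ).det = φ ⬝ᵥ (M.adjugate *ᵥ v) := by
  classical
  have hrow : ∀ i, (M.updateRow i φ).det = ∑ j, φ j * M.adjugate j i := by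
    intro i
    have hφ : φ = ∑ j, φ j • (Pi.single j (1 : R) : Fin n → R) := by
      funext t
      rw [Finset.sum_apply]
      simp [Pi.single_apply, Finset.sum_ite_eq', mul_comm]
    have h1 : Mᵀ.cramer φ = Mᵀ.cramer (∑ j, φ j • (Pi.single j (1 : R) : Fin n → R)) := by
      rw [← hφ]
    rw [← Matrix.cramer_transpose_apply, h1, map_sum, Finset.sum_apply]
    refine Finset.sum_congr rfl fun j _ => ?_
    rw [LinearMap.map_smul]
    simp [Matrix.adjugate_def, mul_comm]
  simp only [hrow, dotProduct, Matrix.mulVec, Finset.mul_sum]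
  rw [Finset.sum_comm]
  refine Finset.sum_congr rfl fun j _ => Finset.sum_congr rfl fun i _ => by ring

lemma charpoly_eq (A : Matrix (Fin n) (Fin n) R) :
    A.charpoly = ∑ k ∈ Finset.range (n + 1),
      Polynomial.C ((-1 : R) ^ k * pms A k) * (Polynomial.X : R[X]) ^ (n - k) := by
  classical
  have hch : A.charmatrix = (-(A.map (Polynomial.C : R →+* R[X]))) +
      (Polynomial.X : R[X]) • (1 : Matrix (Fin n) (Fin n) R[X]) := by
    rw [Matrix.charmatrix]
    rw [Matrix.scalar_apply, ← Matrix.smul_one_eq_diagonal]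
    rw [sub_eq_add_neg, add_comm]
    rfl
  rw [Matrix.charpoly, hch, det_add_smul_one]
  refine Finset.sum_congr rfl fun k _ => ?_
  rw [pms_neg, pms_map, _root_.map_mul, map_pow, map_neg, _root_.map_one]

lemma ch_sum (A : Matrix (Fin n) (Fin n) R) :
    ∑ j ∈ Finset.range (n + 1), ((-1 : R) ^ j * pms A (n - j)) • A ^ j = 0 := by
  classical
  have h0 := A.aeval_self_charpoly
  rw [charpoly_eq, map_sum] at h0
  simp only [_root_.map_mul, Polynomial.aeval_C, Polynomial.aeval_X_pow] at h0
  have hk : ∑ k ∈ Finset.range (n + 1), ((-1 : R) ^ k * pms A k) • A ^ (n - k) = 0 := by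
    simpa [Algebra.smul_def] using h0
  have hr := Finset.sum_range_reflect
    (fun j => ((-1 : R) ^ j * pms A (n - j)) • A ^ j) (n + 1)
  rw [← hr]
  have : ∀ j ∈ Finset.range (n + 1),
      ((-1 : R) ^ (n + 1 - 1 - j) * pms A (n - (n + 1 - 1 - j))) • A ^ (n + 1 - 1 - j) =
      ((-1 : R) ^ n) • (((-1 : R) ^ j * pms A j) • A ^ (n - j)) := by
    intro j hj
    have hjn : j ≤ n := Nat.lt_succ_iff.mp (Finset.mem_range.mp hj)
    have e1 : n + 1 - 1 - j = n - j := by omega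
    have e2 : n - (n - j) = j := by omega
    have e3 : (-1 : R) ^ (n - j) = (-1 : R) ^ n * (-1 : R) ^ j := by
      rw [← pow_add]
      conv_lhs => rw [show n - j = 2 * j + (n - j) - 2 * j by omega]
      rw [show n + j = 2 * j + (n - j) by omega]
      rw [pow_add, pow_mul, neg_one_sq, one_pow, one_mul,
        Nat.add_sub_cancel_left]
    rw [e1, e2, e3, smul_smul, mul_assoc]
  rw [Finset.sum_congr rfl this, ← Finset.smul_sum, hk, smul_zero]

noncomputable def bmat (A : Matrix (Fin n) (Fin n) R) (d : ℕ) : Matrix (Fin n) (Fin n) R :=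
  ∑ j ∈ Finset.range (n - d), ((-1 : R) ^ j * pms A (n - 1 - d - j)) • A ^ j

lemma bmat_succ (A : Matrix (Fin n) (Fin n) R) {e : ℕ} (he1 : 1 ≤ e) (hen : e ≤ n) :
    bmat A (e - 1) + A * bmat A e = (pms A (n - e)) • 1 := by
  have h1 : n - (e - 1) = (n - e) + 1 := by omega
  have e0 : n - 1 - (e - 1) - 0 = n - e := by omega
  rw [bmat, bmat, h1, Finset.sum_range_succ', Finset.mul_sum, e0, pow_zero, one_mul, pow_zero,
    add_right_comm, ← Finset.sum_add_distrib]
  rw [Finset.sum_eq_zero, zero_add]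
  intro j hj
  have e1 : n - 1 - (e - 1) - (j + 1) = n - 1 - e - j := by omega
  rw [e1, mul_smul_comm, ← pow_succ', pow_succ (-1 : R) j]
  module

lemma A_mul_bmat_zero (A : Matrix (Fin n) (Fin n) R) (hn : 1 ≤ n) :
    A * bmat A 0 = (pms A n) • 1 := by
  have h := ch_sum A
  rw [Finset.sum_range_succ'] at h
  simp only [pow_zero, one_mul, Nat.sub_zero] at h
  have h2 : ∑ j ∈ Finset.range n, ((-1 : R) ^ (j + 1) * pms A (n - (j + 1))) • A ^ (j + 1) =
      -((pms A n) • (1 : Matrix (Fin n) (Fin n) R)) := by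
    rw [eq_neg_iff_add_eq_zero]
    simpa using h
  rw [bmat, Nat.sub_zero, Finset.mul_sum]
  have h3 : ∀ j ∈ Finset.range n,
      A * (((-1 : R) ^ j * pms A (n - 1 - 0 - j)) • A ^ j) =
      -(((-1 : R) ^ (j + 1) * pms A (n - (j + 1))) • A ^ (j + 1)) := by
    intro j hj
    have e1 : n - 1 - 0 - j = n - (j + 1) := by omega
    rw [mul_smul_comm, ← pow_succ', e1, pow_succ (-1 : R) j]
    module
  rw [Finset.sum_congr rfl h3, Finset.sum_neg_distrib, h2, neg_neg]

lemma bmat_top (A : Matrix (Fin n) (Fin n) R) (hn : 1 ≤ n) :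
    bmat A (n - 1) = 1 := by
  rw [bmat, show n - (n - 1) = 1 by omega, Finset.sum_range_one]
  rw [show n - 1 - (n - 1) - 0 = 0 by omega, pms_zero, pow_zero, pow_zero, one_mul, one_smul]

end PMSAux

namespace PMSAux
open Polynomial
variable {F : Type*} [Field F] {n : ℕ}

noncomputable def nmat (A : Matrix (Fin n) (Fin n) F) : Matrix (Fin n) (Fin n) F[X] :=
  ∑ d ∈ Finset.range n, (Polynomial.X ^ d : F[X]) • (bmat A d).map (Polynomial.C)

lemma map_smul_one (c : F) :
    ((c • (1 : Matrix (Fin n) (Fin n) F)).map (Polynomial.C : F → F[X])) =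
      Polynomial.C c • (1 : Matrix (Fin n) (Fin n) F[X]) := by
  ext i j
  simp [Matrix.one_apply, apply_ite]

lemma det_M_eq (A : Matrix (Fin n) (Fin n) F) :
    (A.map (Polynomial.C : F → F[X]) + (Polynomial.X : F[X]) • 1).det =
      ∑ k ∈ Finset.range (n + 1), Polynomial.C (pms A k) * (Polynomial.X : F[X]) ^ (n - k) := by
  rw [det_add_smul_one]
  refine Finset.sum_congr rfl fun k _ => ?_
  rw [pms_map]

lemma det_M_ne_zero (A : Matrix (Fin n) (Fin n) F) :
    (A.map (Polynomial.C : F → F[X]) + (Polynomial.X : F[X]) • 1).det ≠ 0 := by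
  intro h
  have hc : ((A.map (Polynomial.C : F → F[X]) + (Polynomial.X : F[X]) • 1).det).coeff n = 1 := by
    rw [det_M_eq, Polynomial.finset_sum_coeff]
    simp only [Polynomial.coeff_C_mul, Polynomial.coeff_X_pow]
    rw [Finset.sum_eq_single 0]
    · simp [pms_zero]
    · intro k hk hk0
      have : ¬ (n = n - k) := by
        have := Finset.mem_range.mp hk; omega
      simp [this]
    · intro h0; exact absurd (Finset.mem_range.mpr (Nat.succ_pos n)) h0
  rw [h, Polynomial.coeff_zero] at hc
  exact zero_ne_one hc

lemma mul_nmat (A : Matrix (Fin n) (Fin n) F) (hn : 1 ≤ n) :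
    (A.map (Polynomial.C : F → F[X]) + (Polynomial.X : F[X]) • 1) * nmat A =
      (A.map (Polynomial.C : F → F[X]) + (Polynomial.X : F[X]) • 1).det • 1 := by
  classical
  set M : Matrix (Fin n) (Fin n) F[X] :=
    A.map (Polynomial.C : F → F[X]) + (Polynomial.X : F[X]) • 1 with hM
  have target : ∀ (c : F) (e : ℕ),
      ((Polynomial.X : F[X]) ^ e • ((c • (1 : Matrix (Fin n) (Fin n) F)).map
        (Polynomial.C : F → F[X]))) = (Polynomial.C c * (Polynomial.X : F[X]) ^ e) • 1 := by
    intro c e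
    rw [map_smul_one, smul_smul, mul_comm]
  -- expand the product
  rw [hM, add_mul, Matrix.smul_mul, one_mul]
  rw [nmat, Finset.mul_sum, Finset.smul_sum]
  have h1 : ∀ d ∈ Finset.range n,
      A.map (Polynomial.C : F → F[X]) * ((Polynomial.X : F[X]) ^ d • (bmat A d).map Polynomial.C) =
      (Polynomial.X : F[X]) ^ d • ((A * bmat A d).map (Polynomial.C : F → F[X])) := by
    intro d _
    rw [Matrix.mul_smul, ← Matrix.map_mul]
  have h2 : ∀ d ∈ Finset.range n,
      (Polynomial.X : F[X]) • ((Polynomial.X : F[X]) ^ d • (bmat A d).map Polynomial.C) =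
      (Polynomial.X : F[X]) ^ (d + 1) • ((bmat A d).map (Polynomial.C : F → F[X])) := by
    intro d _
    rw [smul_smul, ← pow_succ']
  rw [Finset.sum_congr rfl h1, Finset.sum_congr rfl h2]
  -- split the first sum at the bottom, the second at the top
  obtain ⟨m, rfl⟩ : ∃ m, n = m + 1 := ⟨n - 1, by omega⟩
  rw [Finset.sum_range_succ' (fun d => (Polynomial.X : F[X]) ^ d •
    ((A * bmat A d).map (Polynomial.C : F → F[X]))) m]
  rw [Finset.sum_range_succ (fun d => (Polynomial.X : F[X]) ^ (d + 1) •
    ((bmat A d).map (Polynomial.C : F → F[X])))]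
  rw [A_mul_bmat_zero A (by omega),
    show bmat A m = 1 from by simpa using bmat_top A (Nat.le_add_left 1 m), Matrix.map_one _
      (map_zero Polynomial.C) (map_one Polynomial.C)]
  set G : ℕ → Matrix (Fin (m + 1)) (Fin (m + 1)) F[X] := fun e =>
    (Polynomial.C (pms A (m + 1 - e)) * (Polynomial.X : F[X]) ^ e) • 1 with hG
  have hG0 : (Polynomial.X : F[X]) ^ 0 • ((pms A (m + 1) • (1 : Matrix (Fin (m + 1))
      (Fin (m + 1)) F)).map Polynomial.C) = G 0 := by
    rw [target, hG]
    simp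
  have hGtop : (Polynomial.X : F[X]) ^ (m + 1) • (1 : Matrix (Fin (m + 1)) (Fin (m + 1)) F[X]) =
      G (m + 1) := by
    rw [hG]
    simp [pms_zero]
  have hmid : ∀ d ∈ Finset.range m,
      (Polynomial.X : F[X]) ^ (d + 1) • ((A * bmat A (d + 1)).map (Polynomial.C : F → F[X])) +
      (Polynomial.X : F[X]) ^ (d + 1) • ((bmat A d).map (Polynomial.C : F → F[X])) =
      G (d + 1) := by
    intro d hd
    have hb := bmat_succ A (e := d + 1) (Nat.le_add_left 1 d)
      (by have := Finset.mem_range.mp hd; omega)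
    rw [show d + 1 - 1 = d from rfl] at hb
    rw [← smul_add, ← Matrix.map_add Polynomial.C (map_add Polynomial.C),
      add_comm (A * bmat A (d + 1)) (bmat A d), hb,
      target (pms A (m + 1 - (d + 1))) (d + 1), hG]
  rw [hG0, hGtop]
  have hcomb : (∑ k ∈ Finset.range m, (Polynomial.X : F[X]) ^ (k + 1) •
        ((A * bmat A (k + 1)).map (Polynomial.C : F → F[X]))) + G 0 +
      ((∑ k ∈ Finset.range m, (Polynomial.X : F[X]) ^ (k + 1) •
        ((bmat A k).map (Polynomial.C : F → F[X]))) + G (m + 1)) =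
      ∑ e ∈ Finset.range (m + 2), G e := by
    rw [Finset.sum_range_succ G, Finset.sum_range_succ' G m, ← Finset.sum_congr rfl hmid,
      Finset.sum_add_distrib]
    abel
  rw [hcomb]
  -- right-hand side
  rw [det_M_eq, Finset.sum_smul]
  have hrefl := Finset.sum_range_reflect G (m + 2)
  rw [← hrefl]
  refine Finset.sum_congr rfl fun k hk => ?_
  have hkm : k ≤ m + 1 := by have := Finset.mem_range.mp hk; omega
  rw [hG]
  simp only []
  rw [show m + 2 - 1 - k = m + 1 - k by omega, show m + 1 - (m + 1 - k) = k by omega]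

lemma adjugate_eq (A : Matrix (Fin n) (Fin n) F) (hn : 1 ≤ n) :
    (A.map (Polynomial.C : F → F[X]) + (Polynomial.X : F[X]) • 1).adjugate = nmat A := by
  set M : Matrix (Fin n) (Fin n) F[X] :=
    A.map (Polynomial.C : F → F[X]) + (Polynomial.X : F[X]) • 1 with hM
  have h2 : M * (M.adjugate - nmat A) = 0 := by
    rw [Matrix.mul_sub, Matrix.mul_adjugate, mul_nmat A hn, sub_self]
  have h3 : M.det • (M.adjugate - nmat A) = 0 := by
    calc M.det • (M.adjugate - nmat A) = (M.det • 1) * (M.adjugate - nmat A) := by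
          rw [Matrix.smul_mul, one_mul]
      _ = M.adjugate * M * (M.adjugate - nmat A) := by rw [Matrix.adjugate_mul]
      _ = M.adjugate * (M * (M.adjugate - nmat A)) := by rw [Matrix.mul_assoc]
      _ = 0 := by rw [h2, Matrix.mul_zero]
  have h4 : ∀ i j, M.adjugate i j = nmat A i j := by
    intro i j
    have h5 := congrFun (congrFun h3 i) j
    rw [Matrix.smul_apply, Matrix.sub_apply, smul_eq_mul] at h5
    have h6 : (0 : Matrix (Fin n) (Fin n) F[X]) i j = 0 := rfl
    rw [h6] at h5
    rcases mul_eq_zero.mp h5 with h | h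
    · exact absurd h (det_M_ne_zero A)
    · exact sub_eq_zero.mp h
  exact Matrix.ext h4

lemma sum_mulVec' {α : Type*} [CommRing α] {ι : Type*} (s : Finset ι)
    (M : ι → Matrix (Fin n) (Fin n) α) (w : Fin n → α) :
    (∑ d ∈ s, M d) *ᵥ w = ∑ d ∈ s, (M d) *ᵥ w := by
  funext i
  simp only [Matrix.mulVec, dotProduct, Finset.sum_apply, Matrix.sum_apply,
    Finset.sum_mul]
  exact Finset.sum_comm

lemma dotProduct_sum' {α : Type*} [CommRing α] {ι : Type*} (s : Finset ι) (u : Fin n → α)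
    (w : ι → Fin n → α) : u ⬝ᵥ (∑ d ∈ s, w d) = ∑ d ∈ s, u ⬝ᵥ w d := by
  simp only [dotProduct, Finset.sum_apply, Finset.mul_sum]
  exact Finset.sum_comm

lemma mapC_mulVec (B : Matrix (Fin n) (Fin n) F) (w : Fin n → F) :
    (B.map (Polynomial.C : F → F[X])) *ᵥ (fun i => Polynomial.C (w i)) =
      fun i => Polynomial.C ((B *ᵥ w) i) := by
  funext i
  simp [Matrix.mulVec, dotProduct, map_sum]

lemma dot_mapC (u w : Fin n → F) :
    (fun i => Polynomial.C (u i)) ⬝ᵥ (fun i => Polynomial.C (w i)) =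
      Polynomial.C (u ⬝ᵥ w) := by
  simp [dotProduct, map_sum]

lemma dot_nmat (A : Matrix (Fin n) (Fin n) F) (v φ : Fin n → F) :
    (fun i => Polynomial.C (φ i)) ⬝ᵥ (nmat A *ᵥ (fun i => Polynomial.C (v i))) =
      ∑ d ∈ Finset.range n,
        (Polynomial.X : F[X]) ^ d * Polynomial.C (φ ⬝ᵥ (bmat A d *ᵥ v)) := by
  rw [nmat, sum_mulVec', dotProduct_sum']
  refine Finset.sum_congr rfl fun d _ => ?_
  rw [Matrix.smul_mulVec, dotProduct_smul, mapC_mulVec, dot_mapC, smul_eq_mul]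

lemma dot_bmat (A : Matrix (Fin n) (Fin n) F) (v φ : Fin n → F) (d : ℕ) :
    φ ⬝ᵥ (bmat A d *ᵥ v) = ∑ j ∈ Finset.range (n - d),
      (-1 : F) ^ j * pms A (n - 1 - d - j) * (φ ⬝ᵥ ((A ^ j) *ᵥ v)) := by
  rw [bmat, sum_mulVec', dotProduct_sum']
  refine Finset.sum_congr rfl fun j _ => ?_
  rw [Matrix.smul_mulVec, dotProduct_smul, smul_eq_mul]

end PMSAux

namespace PMSAux
variable {F : Type*} [Field F] {n : ℕ}
open Polynomial

lemma coeff_sum1 (a : ℕ → F) {k₀ : ℕ} (hk : k₀ ≤ n) :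
    (∑ k ∈ Finset.range (n + 1), Polynomial.C (a k) * (Polynomial.X : F[X]) ^ (n - k)).coeff
      (n - k₀) = a k₀ := by
  rw [Polynomial.finset_sum_coeff]
  simp only [Polynomial.coeff_C_mul, Polynomial.coeff_X_pow]
  rw [Finset.sum_eq_single k₀]
  · simp
  · intro k hk' hne
    have hk2 := Finset.mem_range.mp hk'
    rw [if_neg (by omega), mul_zero]
  · intro h; exact absurd (Finset.mem_range.mpr (by omega)) h

lemma coeff_sum2 (b : ℕ → F) {e : ℕ} (he : e < n) :
    (∑ d ∈ Finset.range n, (Polynomial.X : F[X]) ^ d * Polynomial.C (b d)).coeff e = b e := by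
  rw [Polynomial.finset_sum_coeff]
  simp only [Polynomial.coeff_mul_C, Polynomial.coeff_X_pow]
  rw [Finset.sum_eq_single e]
  · simp
  · intro d hd hne
    rw [if_neg (by omega), zero_mul]
  · intro h; exact absurd (Finset.mem_range.mpr he) h

lemma tail_vanish (A : Matrix (Fin n) (Fin n) F) (v φ : Fin n → F) (w : ℕ) :
    ∑ i ∈ Finset.range (n + 1),
      (-1 : F) ^ (w + i) * pms A (n - i) * (φ ⬝ᵥ ((A ^ (w + i)) *ᵥ v)) = 0 := by
  have h := congrArg (fun S : Matrix (Fin n) (Fin n) F => φ ⬝ᵥ ((A ^ w * S) *ᵥ v)) (ch_sum A)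
  simp only [Matrix.mul_zero, Matrix.zero_mulVec, dotProduct_zero] at h
  rw [Finset.mul_sum] at h
  have h2 : ∀ i ∈ Finset.range (n + 1),
      A ^ w * (((-1 : F) ^ i * pms A (n - i)) • A ^ i) =
      ((-1 : F) ^ i * pms A (n - i)) • A ^ (w + i) := by
    intro i _
    rw [Matrix.mul_smul, ← pow_add]
  rw [Finset.sum_congr rfl h2, sum_mulVec', dotProduct_sum'] at h
  have h3 : ∀ i ∈ Finset.range (n + 1),
      φ ⬝ᵥ ((((-1 : F) ^ i * pms A (n - i)) • A ^ (w + i)) *ᵥ v) =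
      (-1 : F) ^ i * pms A (n - i) * (φ ⬝ᵥ ((A ^ (w + i)) *ᵥ v)) := by
    intro i _
    rw [Matrix.smul_mulVec, dotProduct_smul, smul_eq_mul]
  rw [Finset.sum_congr rfl h3] at h
  calc ∑ i ∈ Finset.range (n + 1),
        (-1 : F) ^ (w + i) * pms A (n - i) * (φ ⬝ᵥ ((A ^ (w + i)) *ᵥ v))
      = ∑ i ∈ Finset.range (n + 1),
        (-1 : F) ^ w * ((-1 : F) ^ i * pms A (n - i) * (φ ⬝ᵥ ((A ^ (w + i)) *ᵥ v))) := by
        refine Finset.sum_congr rfl fun i _ => ?_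
        rw [pow_add]; ring
    _ = (-1 : F) ^ w * ∑ i ∈ Finset.range (n + 1),
        (-1 : F) ^ i * pms A (n - i) * (φ ⬝ᵥ ((A ^ (w + i)) *ᵥ v)) := by
        rw [Finset.mul_sum]
    _ = 0 := by rw [h, mul_zero]

end PMSAux

theorem stmt0 {F : Type*} [Field F] {n : ℕ} (hn : 1 ≤ n)
    (A : Matrix (Fin n) (Fin n) F) (v φ : Fin n → F) (k : ℕ) (hk : 1 ≤ k) :
    principalMinorSum (A + Matrix.vecMulVec v φ) k =
      principalMinorSum A k +
        ∑ j ∈ Finset.range k,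
          (-1 : F) ^ j * principalMinorSum A (k - 1 - j) * (φ ⬝ᵥ ((A ^ j) *ᵥ v)) := by
  classical
  open PMSAux Polynomial in
  have hpms : ∀ (B : Matrix (Fin n) (Fin n) F) (k : ℕ),
      principalMinorSum B k = PMSAux.pms B k := fun B k => rfl
  simp only [hpms]
  by_cases hkn : k ≤ n
  · -- polynomial identity
    set M : Matrix (Fin n) (Fin n) F[X] :=
      A.map Polynomial.C + (Polynomial.X : F[X]) • 1 with hM
    have hmapadd : (A + Matrix.vecMulVec v φ).map (Polynomial.C : F → F[X]) +
        (Polynomial.X : F[X]) • 1 =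
        M + Matrix.vecMulVec (fun i => Polynomial.C (v i)) (fun i => Polynomial.C (φ i)) := by
      refine Matrix.ext fun i j => ?_
      simp [Matrix.add_apply, Matrix.map_apply, Matrix.vecMulVec_apply, _root_.map_add,
        _root_.map_mul, Matrix.smul_apply, hM]
      ring
    have hpoly : (∑ k' ∈ Finset.range (n + 1),
        Polynomial.C (PMSAux.pms (A + Matrix.vecMulVec v φ) k') *
          (Polynomial.X : F[X]) ^ (n - k')) =
        (∑ k' ∈ Finset.range (n + 1),
          Polynomial.C (PMSAux.pms A k') * (Polynomial.X : F[X]) ^ (n - k')) +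
        ∑ d ∈ Finset.range n, (Polynomial.X : F[X]) ^ d *
          Polynomial.C (φ ⬝ᵥ (PMSAux.bmat A d *ᵥ v)) := by
      rw [← PMSAux.det_M_eq (A + Matrix.vecMulVec v φ), hmapadd,
        PMSAux.det_add_vecMulVec, PMSAux.sum_v_det_updateRow, PMSAux.adjugate_eq A hn,
        PMSAux.dot_nmat, hM, PMSAux.det_M_eq]
    have h1 : PMSAux.pms (A + Matrix.vecMulVec v φ) k =
        PMSAux.pms A k + (φ ⬝ᵥ (PMSAux.bmat A (n - k) *ᵥ v)) := by
      have h0 := congrArg (fun p : F[X] => p.coeff (n - k)) hpoly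
      simpa only [Polynomial.coeff_add, PMSAux.coeff_sum1 _ hkn,
        PMSAux.coeff_sum2 _ (show n - k < n by omega)] using h0
    rw [h1]
    congr 1
    rw [PMSAux.dot_bmat, show n - (n - k) = k by omega]
    refine Finset.sum_congr rfl fun j hj => ?_
    have hjk := Finset.mem_range.mp hj
    rw [show n - 1 - (n - k) - j = k - 1 - j by omega]
  · push_neg at hkn
    rw [PMSAux.pms_of_gt _ hkn, PMSAux.pms_of_gt _ hkn]
    have hzero : ∑ j ∈ Finset.range k,
        (-1 : F) ^ j * PMSAux.pms A (k - 1 - j) * (φ ⬝ᵥ ((A ^ j) *ᵥ v)) = 0 := by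
      set f : ℕ → F := fun j =>
        (-1 : F) ^ j * PMSAux.pms A (k - 1 - j) * (φ ⬝ᵥ ((A ^ j) *ᵥ v)) with hf
      have hsplit : ∑ j ∈ Finset.range k, f j =
          ∑ j ∈ Finset.Ico 0 (k - 1 - n), f j + ∑ j ∈ Finset.Ico (k - 1 - n) k, f j := by
        rw [Finset.range_eq_Ico, Finset.sum_Ico_consecutive]
        · omega
        · omega
      have hfirst : ∑ j ∈ Finset.Ico 0 (k - 1 - n), f j = 0 := by
        refine Finset.sum_eq_zero fun j hj => ?_
        have hj2 := Finset.mem_Ico.mp hj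
        rw [hf]
        simp only []
        rw [PMSAux.pms_of_gt _ (show n < k - 1 - j by omega), mul_zero, zero_mul]
      have hsecond : ∑ j ∈ Finset.Ico (k - 1 - n) k, f j = 0 := by
        rw [Finset.sum_Ico_eq_sum_range, show k - (k - 1 - n) = n + 1 by omega]
        have heq : ∀ i ∈ Finset.range (n + 1), f (k - 1 - n + i) =
            (-1 : F) ^ (k - 1 - n + i) * PMSAux.pms A (n - i) *
              (φ ⬝ᵥ ((A ^ (k - 1 - n + i)) *ᵥ v)) := by
          intro i hi
          have hi2 := Finset.mem_range.mp hi
          rw [hf]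
          simp only []
          rw [show k - 1 - (k - 1 - n + i) = n - i by omega]
        rw [Finset.sum_congr rfl heq]
        exact PMSAux.tail_vanish A v φ (k - 1 - n)
      rw [hsplit, hfirst, hsecond, add_zero]
    rw [hzero, add_zero]
end

section
/- Let F be a field, n ≥ 1, A an n×n matrix over F, v ∈ F^n a column vector, φ ∈ (F^n)^* a row vector, and λ ∈ F. Then for every integer k ≥ 1, c_k(A + λ·v⊗φ) = c_k(A) + λ · Σ_{j=0}^{k-1} (−1)^j c_{k−1−j}(A) · (φ A^j v); in particular, for each k the function λ ↦ c_k(A + λ·v⊗φ) is affine-linear in λ. -/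
/-!
`c_k(B)` is the coefficient of `X ^ k` in `det (1 + X • B) = charpolyRev (-B)`. Over the power
series ring `det (1 - X • B)` is a unit (constant coefficient `1`), so the matrix determinant lemma
`det (M + u wᵀ) = det M + wᵀ (adj M) u` applies to `M = 1 - X • B`: a rank-one perturbation changes
`charpolyRev` by `X • wᵀ (adj M) u`, which is linear in the perturbation. The coefficients of
`adj M` come from the truncated Neumann series
`adj (1 - N) = det (1 - N) • ∑_{j < m} N ^ j + N ^ m * adj (1 - N)` with `N = X • B`,
whose last term contributes nothing below degree `m`.
-/

open Matrix

open Polynomial Finset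

namespace Matrix

variable {n R : Type*} [Fintype n] [DecidableEq n] [CommRing R]

theorem det_add_vecMulVec_of_isUnit {M : Matrix n n R} (hM : IsUnit M.det) (u w : n → R) :
    (M + vecMulVec u w).det = M.det + w ⬝ᵥ M.adjugate *ᵥ u := by
  have hM' : M * M⁻¹ = 1 := mul_nonsing_inv M hM
  calc (M + vecMulVec u w).det = (M * (1 + vecMulVec (M⁻¹ *ᵥ u) w)).det := by
        rw [Matrix.mul_add, Matrix.mul_one, mul_vecMulVec, mulVec_mulVec, hM', one_mulVec]
    _ = M.det * (1 + w ⬝ᵥ M⁻¹ *ᵥ u) := by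
        rw [det_mul, vecMulVec_eq Unit, det_one_add_replicateCol_mul_replicateRow]
    _ = M.det + w ⬝ᵥ M.adjugate *ᵥ u := by
        rw [mul_add, mul_one, inv_def, smul_mulVec, dotProduct_smul, smul_eq_mul, ← mul_assoc,
          Ring.mul_inverse_cancel _ hM, one_mul]

theorem det_add_vecMulVec_of_isUnit_map {S : Type*} [CommRing S] {f : R →+* S}
    (hf : Function.Injective f) {M : Matrix n n R} (hM : IsUnit (f M.det)) (u w : n → R) :
    (M + vecMulVec u w).det = M.det + w ⬝ᵥ M.adjugate *ᵥ u := by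
  apply hf
  have hmap : f.mapMatrix (M + vecMulVec u w) = f.mapMatrix M + vecMulVec (f ∘ u) (f ∘ w) := by
    ext; simp [vecMulVec_apply]
  have hmulVec : f ∘ (M.adjugate *ᵥ u) = (f.mapMatrix M).adjugate *ᵥ (f ∘ u) := by
    ext; rw [Function.comp_apply, RingHom.map_mulVec, ← RingHom.map_adjugate]; rfl
  rw [f.map_det, hmap, det_add_vecMulVec_of_isUnit (by rwa [← f.map_det]), map_add, f.map_det,
    f.map_dotProduct, hmulVec]

theorem det_one_sub_X_smul_add_vecMulVec (B : Matrix n n R) (u w : n → R[X]) :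
    (1 - (X : R[X]) • B.map C + vecMulVec u w).det =
      B.charpolyRev + w ⬝ᵥ (1 - (X : R[X]) • B.map C).adjugate *ᵥ u := by
  refine det_add_vecMulVec_of_isUnit_map (f := coeToPowerSeries.ringHom)
    (Polynomial.coe_injective R) ?_ u w
  rw [PowerSeries.isUnit_iff_constantCoeff, coeToPowerSeries.ringHom_apply, constantCoeff_coe,
    coeff_zero_eq_eval_zero]
  exact eval_charpolyRev (M := B) ▸ isUnit_one

theorem adjugate_one_sub_eq (N : Matrix n n R) (m : ℕ) :
    (1 - N).adjugate = (1 - N).det • ∑ j ∈ range m, N ^ j + N ^ m * (1 - N).adjugate := by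
  have h := congrArg (· * (1 - N).adjugate) (geom_sum_mul_neg N m)
  simp only [Matrix.mul_assoc, mul_adjugate, Matrix.mul_smul, Matrix.mul_one, Matrix.sub_mul,
    Matrix.one_mul] at h
  rw [h, sub_add_cancel]

theorem coeff_adjugate_one_sub_X_smul (B : Matrix n n R) (k : ℕ) :
    (1 - (X : R[X]) • B.map C).adjugate.map (coeff · k) =
      ∑ j ∈ range (k + 1), B.charpolyRev.coeff (k - j) • B ^ j := by
  have hpow (j : ℕ) : ((X : R[X]) • B.map C) ^ j = (X ^ j : R[X]) • (B ^ j).map C := by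
    rw [_root_.smul_pow, Matrix.map_pow]
  ext a b
  rw [map_apply, adjugate_one_sub_eq _ (k + 1), hpow, smul_mul_assoc]
  simp only [Matrix.add_apply, Matrix.smul_apply, sum_apply, hpow, smul_eq_mul, map_apply,
    mul_sum, finsetSum_coeff, coeff_add]
  rw [coeff_X_pow_mul', if_neg (by omega), add_zero]
  refine sum_congr rfl fun j hj => ?_
  rw [mul_left_comm, coeff_X_pow_mul', if_pos (by simpa [Nat.lt_succ_iff] using hj), mul_comm,
    coeff_C_mul]
  exact mul_comm _ _

theorem coeff_succ_charpolyRev_sub_vecMulVec (B : Matrix n n R) (u w : n → R) (k : ℕ) :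
    (B - vecMulVec u w).charpolyRev.coeff (k + 1) =
      B.charpolyRev.coeff (k + 1) +
        ∑ j ∈ range (k + 1), B.charpolyRev.coeff (k - j) * (w ⬝ᵥ B ^ j *ᵥ u) := by
  have hmat : 1 - (X : R[X]) • (B - vecMulVec u w).map C =
      1 - (X : R[X]) • B.map C + vecMulVec ((X : R[X]) • (C ∘ u)) (C ∘ w) := by
    refine Matrix.ext fun i j => ?_
    simp only [Matrix.sub_apply, Matrix.add_apply, Matrix.smul_apply, map_apply, vecMulVec_apply,
      map_sub, map_mul, smul_eq_mul, Pi.smul_apply, Function.comp_apply]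
    ring
  have hcoeff (P : Matrix n n R[X]) :
      ((C ∘ w) ⬝ᵥ P *ᵥ (C ∘ u)).coeff k = w ⬝ᵥ P.map (coeff · k) *ᵥ u := by
    simp [dotProduct, mulVec, finsetSum_coeff, coeff_C_mul, coeff_mul_C, mul_sum]
  rw [charpolyRev, hmat, det_one_sub_X_smul_add_vecMulVec, coeff_add, mulVec_smul,
    dotProduct_smul, smul_eq_mul, coeff_X_mul, hcoeff, coeff_adjugate_one_sub_X_smul, sum_mulVec,
    dotProduct_sum]
  simp [smul_mulVec, dotProduct_smul]

end Matrix

theorem principalMinorSum_eq_coeff_charpolyRev_neg {F : Type*} [Field F] {n : ℕ}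
    (A : Matrix (Fin n) (Fin n) F) (k : ℕ) :
    principalMinorSum A k = (-A).charpolyRev.coeff k := by
  rw [charpolyRev, Matrix.map_neg C (map_neg C) A, smul_neg, sub_neg_eq_add,
    coeff_det_one_add_X_smul_eq_sum_minors]
  rfl

theorem stmt1_general {F : Type*} [Field F] {n : ℕ}
    (A : Matrix (Fin n) (Fin n) F) (v φ : Fin n → F) (lam : F) (k : ℕ) (hk : 1 ≤ k) :
    principalMinorSum (A + lam • Matrix.vecMulVec v φ) k =
      principalMinorSum A k +
        lam * ∑ j ∈ Finset.range k,
          (-1 : F) ^ j * principalMinorSum A (k - 1 - j) * (φ ⬝ᵥ ((A ^ j) *ᵥ v)) := by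
  obtain ⟨k, rfl⟩ : ∃ k', k = k' + 1 := ⟨k - 1, by omega⟩
  have hneg : -(A + lam • vecMulVec v φ) = -A - vecMulVec (lam • v) φ := by
    rw [neg_add, sub_eq_add_neg, smul_vecMulVec]
  simp only [principalMinorSum_eq_coeff_charpolyRev_neg, hneg,
    coeff_succ_charpolyRev_sub_vecMulVec, Nat.add_sub_cancel, mul_sum]
  congr 1
  refine sum_congr rfl fun j _ => ?_
  rw [show (-A) ^ j = (-1 : F) ^ j • A ^ j by rw [← neg_one_smul F A, _root_.smul_pow],
    smul_mulVec, mulVec_smul, dotProduct_smul, dotProduct_smul, smul_eq_mul, smul_eq_mul]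
  ring

theorem stmt1 {F : Type*} [Field F] {n : ℕ} (hn : 1 ≤ n)
    (A : Matrix (Fin n) (Fin n) F) (v φ : Fin n → F) (lam : F) (k : ℕ) (hk : 1 ≤ k) :
    principalMinorSum (A + lam • Matrix.vecMulVec v φ) k =
      principalMinorSum A k +
        lam * ∑ j ∈ Finset.range k,
          (-1 : F) ^ j * principalMinorSum A (k - 1 - j) * (φ ⬝ᵥ ((A ^ j) *ᵥ v)) :=
  stmt1_general A v φ lam k hk
end

section
/- Let F be a field, V a finite-dimensional vector space over F of dimension n, A ∈ End(V), v ∈ V, and φ ∈ V^*. Then the following are equivalent: (1) φ(A^k v) = 0 for all integers k ≥ 0; (2) for every λ ∈ F, the characteristic polynomial of A + λ·(v⊗φ) equals the characteristic polynomial of A; (3) there exists a nonzero λ ∈ F such that the characteristic polynomial of A + λ·(v⊗φ) equals the characteristic polynomial of A. -/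
/-!
Over `R⟦X⟧` the matrix `1 - X • M` has inverse `∑ₖ Mᵏ Xᵏ`, so the matrix determinant lemma gives
`charpolyRev (M + c • u wᵀ) = charpolyRev M * (1 - c X ∑ₖ (wᵀ Mᵏ u) Xᵏ)`. As `charpolyRev M` has
constant term `1` and `R⟦X⟧` is a domain, the characteristic polynomial is unchanged iff `c = 0`
or all the moments `wᵀ Mᵏ u` vanish. Nothing is lost by reversing, since characteristic
polynomials of matrices of the same size are monic of the same degree.
-/

open PowerSeries
open scoped Polynomial

namespace Matrix

variable {R : Type*} [CommRing R] {n : Type*} [Fintype n] [DecidableEq n]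

theorem charpoly_eq_iff_charpolyRev_eq [Nontrivial R] {M N : Matrix n n R} :
    M.charpoly = N.charpoly ↔ M.charpolyRev = N.charpolyRev := by
  refine ⟨fun h => by rw [← reverse_charpoly, h, reverse_charpoly], fun h => ?_⟩
  rw [← reverse_charpoly, ← reverse_charpoly, Polynomial.reverse, Polynomial.reverse,
    charpoly_natDegree_eq_dim, charpoly_natDegree_eq_dim] at h
  simpa using congrArg (Polynomial.reflect (Fintype.card n)) h

noncomputable def geomSeries (M : Matrix n n R) : Matrix n n R⟦X⟧ :=
  of fun i j => mk fun k => (M ^ k) i j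

theorem one_sub_X_smul_mul_geomSeries (M : Matrix n n R) :
    (1 - (X : R⟦X⟧) • M.map (C (R := R))) * geomSeries M = 1 := by
  ext i j k
  rw [sub_mul, Matrix.one_mul, Matrix.smul_mul, sub_apply, smul_apply, map_sub, smul_eq_mul]
  rcases k with _ | k
  · by_cases hij : i = j <;> simp [geomSeries, one_apply, hij]
  · by_cases hij : i = j <;> simp [geomSeries, one_apply, hij, mul_apply, pow_succ']

theorem coe_charpolyRev (M : Matrix n n R) :
    (M.charpolyRev : R⟦X⟧) = det (1 - (X : R⟦X⟧) • M.map (C (R := R))) := by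
  rw [charpolyRev, ← Polynomial.coeToPowerSeries.ringHom_apply, RingHom.map_det]
  congr 1
  ext i j : 1
  by_cases hij : i = j <;> simp [hij, mul_comm (C _) X]

theorem det_one_add_vecMulVec (u w : n → R) : det (1 + vecMulVec u w) = 1 + w ⬝ᵥ u := by
  rw [vecMulVec_eq Unit, det_one_add_replicateCol_mul_replicateRow]

theorem dotProduct_geomSeries_mulVec (M : Matrix n n R) (u w : n → R) :
    (C ∘ w) ⬝ᵥ (geomSeries M *ᵥ (C ∘ u)) = mk fun k => w ⬝ᵥ (M ^ k *ᵥ u) := by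
  ext k
  simp [dotProduct, mulVec, geomSeries, map_sum, Finset.mul_sum]

theorem coe_charpolyRev_add_smul_vecMulVec (M : Matrix n n R) (u w : n → R) (c : R) :
    ((M + c • vecMulVec u w).charpolyRev : R⟦X⟧) =
      (M.charpolyRev : R⟦X⟧) * (1 - C c * X * mk fun k => w ⬝ᵥ (M ^ k *ᵥ u)) := by
  have hfactor : 1 - (X : R⟦X⟧) • (M + c • vecMulVec u w).map (C (R := R)) =
      (1 - (X : R⟦X⟧) • M.map (C (R := R))) *
        (1 + vecMulVec (-(C c * X) • (geomSeries M *ᵥ (C ∘ u))) (C ∘ w)) := by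
    rw [Matrix.mul_add, Matrix.mul_one, smul_vecMulVec, Matrix.mul_smul, ← mul_vecMulVec,
      ← Matrix.mul_assoc, one_sub_X_smul_mul_geomSeries, Matrix.one_mul]
    ext i j : 1
    simp [vecMulVec_apply, sub_apply]
    ring
  rw [coe_charpolyRev, coe_charpolyRev, hfactor, det_mul, det_one_add_vecMulVec, dotProduct_smul,
    dotProduct_geomSeries_mulVec]
  ring

theorem charpoly_add_smul_vecMulVec_eq_iff [IsDomain R] (M : Matrix n n R) (u w : n → R)
    (c : R) :
    (M + c • vecMulVec u w).charpoly = M.charpoly ↔ c = 0 ∨ ∀ k, w ⬝ᵥ (M ^ k *ᵥ u) = 0 := by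
  have hrev : (M.charpolyRev : R⟦X⟧) ≠ 0 := fun h => by
    simpa [Polynomial.coeff_zero_eq_eval_zero] using congrArg (coeff 0) h
  rw [charpoly_eq_iff_charpolyRev_eq, ← Polynomial.coe_inj, coe_charpolyRev_add_smul_vecMulVec,
    mul_eq_left₀ hrev, sub_eq_self, mul_eq_zero, mul_eq_zero, map_eq_zero_iff _ C_injective,
    or_iff_left X_ne_zero, PowerSeries.ext_iff]
  simp

end Matrix

namespace LinearMap

theorem charpoly_add_smul_smulRight_eq_iff {R V : Type*} [CommRing R] [IsDomain R]
    [AddCommGroup V] [Module R V] [Module.Free R V] [Module.Finite R V]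
    (A : Module.End R V) (v : V) (φ : Module.Dual R V) (c : R) :
    (A + c • φ.smulRight v).charpoly = A.charpoly ↔ c = 0 ∨ ∀ k, φ ((A ^ k) v) = 0 := by
  classical
  let b := Module.Free.chooseBasis R V
  have hφ : ∀ x, (φ ∘ b) ⬝ᵥ b.repr x = φ x := fun x => by
    conv_rhs => rw [← b.sum_repr x]
    simp only [dotProduct, map_sum, map_smul, smul_eq_mul, Function.comp_apply, mul_comm]
  rw [← charpoly_toMatrix _ b, ← charpoly_toMatrix A b, map_add, map_smul, toMatrix_smulRight,
    Matrix.charpoly_add_smul_vecMulVec_eq_iff]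
  simp only [toMatrix_pow, toMatrix_mulVec_repr, hφ]

end LinearMap

theorem stmt2 {F V : Type*} [Field F] [AddCommGroup V] [Module F V]
    [FiniteDimensional F V]
    (A : Module.End F V) (v : V) (φ : Module.Dual F V) :
    List.TFAE [
      (∀ k : ℕ, φ ((A ^ k) v) = 0),
      (∀ lam : F, (A + lam • φ.smulRight v).charpoly = A.charpoly),
      (∃ lam : F, lam ≠ 0 ∧ (A + lam • φ.smulRight v).charpoly = A.charpoly)] := by
  simp only [LinearMap.charpoly_add_smul_smulRight_eq_iff]
  tfae_have 1 → 2 := fun h _ => Or.inr h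
  tfae_have 2 → 3 := fun h => ⟨1, one_ne_zero, h 1⟩
  tfae_have 3 → 1 := fun ⟨_, hlam, h⟩ => h.resolve_left hlam
  tfae_finish
end

section
/- Let F be a field, V a finite-dimensional vector space over F, A ∈ End(V), v ∈ V, and φ ∈ V^*. If the endomorphism v⊗φ lies in the image of the commutator map B ↦ AB − BA, i.e. there exists B ∈ End(V) with v⊗φ = AB − BA, then φ(A^k v) = 0 for all integers k ≥ 0. -/
open LinearMap

lemma trace_smulRight' {F V : Type*} [Field F] [AddCommGroup V] [Module F V]
    [FiniteDimensional F V] (φ : Module.Dual F V) (w : V) :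
    LinearMap.trace F V (φ.smulRight w) = φ w := by
  have : φ.smulRight w = dualTensorHom F V V (φ ⊗ₜ w) := by
    ext u; simp [dualTensorHom_apply]
  rw [this, trace_eq_contract_apply, contractLeft_apply]

theorem stmt3 {F V : Type*} [Field F] [AddCommGroup V] [Module F V]
    [FiniteDimensional F V]
    (A : Module.End F V) (v : V) (φ : Module.Dual F V)
    (h : ∃ B : Module.End F V, φ.smulRight v = A * B - B * A) :
    ∀ k : ℕ, φ ((A ^ k) v) = 0 := by
  obtain ⟨B, hB⟩ := h
  intro k
  have h1 : φ.smulRight ((A ^ k) v) = A ^ k * φ.smulRight v := by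
    ext u; simp
  have := trace_smulRight' φ ((A ^ k) v)
  rw [h1, hB, mul_sub, map_sub] at this
  rw [← this, LinearMap.trace_mul_comm F (A ^ k) (B * A), mul_assoc,
    LinearMap.trace_mul_comm F B (A * A ^ k),
    show A * A ^ k * B = A ^ k * (A * B) by rw [← pow_succ', pow_succ, mul_assoc], sub_self]
end

section
/- Let F be a field of characteristic different from 2, V a finite-dimensional vector space over F, A ∈ End(V), v ∈ V, and φ ∈ V^*. If φ(f(A)² v) = 0 for every polynomial f ∈ F[x], then φ(A^k v) = 0 for all integers k ≥ 0. -/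
open Polynomial

theorem AddMonoidHom.map_mul_eq_zero_of_map_sq_eq_zero {S M : Type*} [CommSemiring S]
    [AddCommMonoid M] (h2 : ∀ m : M, m + m = 0 → m = 0) (L : S →+ M)
    (hL : ∀ a, L (a ^ 2) = 0) (a b : S) : L (a * b) = 0 := by
  apply h2
  have hsq : (a + b) ^ 2 = a ^ 2 + (a * b + a * b) + b ^ 2 := by ring
  simpa only [hsq, map_add, hL, zero_add, add_zero] using hL (a + b)

theorem stmt6_general {F V : Type*} [Field F] (hchar : ringChar F ≠ 2)
    [AddCommGroup V] [Module F V]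
    (A : Module.End F V) (v : V) (φ : Module.Dual F V)
    (h : ∀ f : Polynomial F, φ (((Polynomial.aeval A f) ^ 2) v) = 0) :
    ∀ k : ℕ, φ ((A ^ k) v) = 0 := by
  intro k
  have h2 (x : F) (hx : x + x = 0) : x = 0 := by
    rw [← two_mul] at hx
    exact (mul_eq_zero.mp hx).resolve_left (Ring.two_ne_zero hchar)
  let L : F[X] →+ F := AddMonoidHom.mk' (fun f => φ (aeval A f v)) fun f g => by simp
  have hL (f : F[X]) : L (f ^ 2) = 0 := by simpa [L] using h f
  simpa [L] using L.map_mul_eq_zero_of_map_sq_eq_zero h2 hL (X ^ k) 1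

theorem stmt6 {F V : Type*} [Field F] (hchar : ringChar F ≠ 2)
    [AddCommGroup V] [Module F V] [FiniteDimensional F V]
    (A : Module.End F V) (v : V) (φ : Module.Dual F V)
    (h : ∀ f : Polynomial F, φ (((Polynomial.aeval A f) ^ 2) v) = 0) :
    ∀ k : ℕ, φ ((A ^ k) v) = 0 :=
  stmt6_general hchar A v φ h
end

section
/- Let F be an infinite field, V a finite-dimensional vector space over F, A ∈ End(V), v ∈ V, and φ ∈ V^*. If φ(f(A)² v) = 0 for every polynomial f ∈ F[x] that is coprime to the characteristic polynomial of A, then φ(f(A)² v) = 0 for every polynomial f ∈ F[x]. -/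
/-!
Fix `f` and put `B = f(A)`. Each irreducible factor of the characteristic polynomial `χ` divides
`f + t` for at most one constant `t`, so `f + t` is coprime to `χ` for all but finitely many `t`.
On the other hand `t ↦ φ((B + t)² v) = φ(B² v) + 2t φ(B v) + t² φ(v)` is a polynomial function
of `t`; it vanishes on the infinitely many good `t`, so it is the zero polynomial, and its
constant term `φ(B² v)` is zero.
-/

open Polynomial UniqueFactorizationMonoid

namespace Polynomial

variable {K : Type*} [Field K]

theorem subsingleton_setOf_dvd_add_C {p : K[X]} (hp : ¬IsUnit p) (f : K[X]) :
    {t : K | p ∣ f + C t}.Subsingleton := by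
  intro s hs t ht
  by_contra hst
  have hdvd : p ∣ C (s - t) := by simpa [C_sub] using dvd_sub hs ht
  exact hp (isUnit_of_dvd_unit hdvd (isUnit_C.mpr (sub_ne_zero.mpr hst).isUnit))

theorem finite_setOf_not_isCoprime_add_C {g : K[X]} (hg : g ≠ 0) (f : K[X]) :
    {t : K | ¬IsCoprime (f + C t) g}.Finite := by
  classical
  refine ((normalizedFactors g).toFinset.finite_toSet.biUnion fun p hp =>
    (subsingleton_setOf_dvd_add_C (irreducible_of_normalized_factor p
      (Multiset.mem_toFinset.mp hp)).not_isUnit f).finite).subset ?_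
  intro t ht
  obtain ⟨z, hz, hzf, hzg⟩ : ∃ z, Irreducible z ∧ z ∣ f + C t ∧ z ∣ g := by
    by_contra! H
    exact ht (isCoprime_of_irreducible_dvd (fun h => hg h.2) H)
  obtain ⟨p, hp, hzp⟩ := exists_mem_normalizedFactors_of_dvd hg hz hzg
  exact Set.mem_biUnion (Multiset.mem_toFinset.mpr hp) (hzp.symm.dvd.trans hzf)

end Polynomial

theorem Module.Dual.apply_sq_add_algebraMap_apply {R M : Type*} [CommSemiring R]
    [AddCommMonoid M] [Module R M] (φ : Module.Dual R M) (B : Module.End R M) (v : M) (t : R) :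
    φ (((B + algebraMap R (Module.End R M) t) ^ 2) v) = φ ((B ^ 2) v) + 2 * t * φ (B v) + t ^ 2 * φ v := by
  simp only [sq, add_mul, mul_add, Module.algebraMap_end_apply, LinearMap.add_apply,
    Module.End.mul_apply, map_add, map_smul, smul_eq_mul, Algebra.commutes]
  ring

theorem stmt7 {F V : Type*} [Field F] [Infinite F]
    [AddCommGroup V] [Module F V] [FiniteDimensional F V]
    (A : Module.End F V) (v : V) (φ : Module.Dual F V)
    (h : ∀ f : Polynomial F, IsCoprime f A.charpoly →
      φ (((Polynomial.aeval A f) ^ 2) v) = 0) :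
    ∀ f : Polynomial F, φ (((Polynomial.aeval A f) ^ 2) v) = 0 := by
  intro f
  set B := aeval A f
  set q : F[X] := C (φ ((B ^ 2) v)) + C (2 * φ (B v)) * X + C (φ v) * X ^ 2
  have hq_eval (t : F) : q.eval t = φ ((aeval A (f + C t) ^ 2) v) := by
    rw [map_add, aeval_C, φ.apply_sq_add_algebraMap_apply]
    simp only [q, eval_add, eval_mul, eval_C, eval_X, eval_pow]
    ring
  have hq : q = 0 := by
    refine eq_zero_of_infinite_isRoot q <|
      (finite_setOf_not_isCoprime_add_C A.charpoly_monic.ne_zero f).infinite_compl.mono ?_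
    intro t ht
    rw [Set.mem_ofPred_eq, IsRoot, hq_eval]
    exact h _ (not_not.mp ht)
  simpa [q] using congrArg (eval 0) hq
end

section
/- Let F be a field, f ∈ F[x] a monic irreducible polynomial of degree k, s ≥ 1, and V a vector space over F of dimension ks. Let A ∈ End(V) satisfy that both the characteristic polynomial and the minimal polynomial of A equal f^s. Set U_i := f(A)^i V for 0 ≤ i ≤ s, and for a subspace W ⊆ V let W^⊥ := {φ ∈ V^* : φ(w) = 0 for all w ∈ W}. Then {(v, φ) ∈ V × V^* : φ(A^k v) = 0 for all k ≥ 0} = ⋃_{i=0}^{s} (U_i × (U_i)^⊥), i.e. φ(A^k v) = 0 for all k ≥ 0 if and only if there exists 0 ≤ i ≤ s with v ∈ f(A)^i V and φ vanishing on f(A)^i V. -/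
/-!
A vector `v₀` with `f(A)^(s-1) v₀ ≠ 0` has annihilator `(f^s)` in `F[X]`, so it spans an `A`-cyclic
subspace of dimension `ks`, i.e. all of `V`. The condition `φ(A^m v) = 0` for all `m` says that
`φ` vanishes on the cyclic subspace `F[A] v`, and every cyclic subspace is some `f(A)^i V`:
if `f^j` is the annihilator of `v = p(A) v₀`, then `f^(s-j) ∣ p`, so `F[A] v ⊆ f(A)^(s-j) V`, and
both have dimension `jk`.
-/

open Polynomial

section CyclicSubspace

variable {F V : Type*} [Field F] [AddCommGroup V] [Module F V] (A : Module.End F V)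

/-- Its range is the `A`-cyclic subspace `F[A] w`. -/
noncomputable def aevalApply (w : V) : F[X] →ₗ[F] V :=
  (LinearMap.applyₗ w).comp (aeval A).toLinearMap

@[simp]
lemma aevalApply_apply (w : V) (p : F[X]) : aevalApply A w p = aeval A p w := rfl

lemma aeval_mul_apply (p q : F[X]) (w : V) :
    aeval A (p * q) w = aeval A p (aeval A q w) := by
  rw [map_mul, Module.End.mul_apply]

lemma self_mem_range_aevalApply (w : V) : w ∈ LinearMap.range (aevalApply A w) :=
  ⟨1, by simp⟩

lemma mem_dualAnnihilator_range_aevalApply_iff (w : V) (φ : Module.Dual F V) :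
    φ ∈ (LinearMap.range (aevalApply A w)).dualAnnihilator ↔ ∀ m : ℕ, φ ((A ^ m) w) = 0 := by
  rw [Submodule.mem_dualAnnihilator]
  refine ⟨fun h m => h _ ⟨X ^ m, by simp⟩, ?_⟩
  rintro h _ ⟨p, rfl⟩
  induction p using Polynomial.induction_on' with
  | add p q hp hq => simp only [map_add, hp, hq, add_zero]
  | monomial n c => simp [h]

lemma aeval_comp_aevalApply (q : F[X]) (w : V) :
    aeval A q ∘ₗ aevalApply A w = aevalApply A (aeval A q w) := by
  ext p
  simp only [LinearMap.comp_apply, aevalApply_apply, ← aeval_mul_apply, mul_comm]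

lemma range_aevalApply_le_of_mem_range {q : F[X]} {w : V}
    (hw : w ∈ LinearMap.range (aeval A q)) :
    LinearMap.range (aevalApply A w) ≤ LinearMap.range (aeval A q) := by
  obtain ⟨u, rfl⟩ := hw
  rw [← aeval_comp_aevalApply]
  exact LinearMap.range_comp_le_range _ _

variable {A} {f : F[X]} {j : ℕ} {w : V}

lemma exists_forall_aeval_pow_apply_eq_zero_iff {s : ℕ} (hs : aeval A (f ^ s) w = 0) :
    ∃ j ≤ s, ∀ t, aeval A (f ^ t) w = 0 ↔ j ≤ t := by
  classical
  have hex : ∃ j, aeval A (f ^ j) w = 0 := ⟨s, hs⟩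
  refine ⟨Nat.find hex, Nat.find_min' hex hs, fun t => ⟨fun ht => Nat.find_min' hex ht, ?_⟩⟩
  intro ht
  rw [← Nat.sub_add_cancel ht, pow_add, aeval_mul_apply, Nat.find_spec hex, map_zero]

/-- The gcd of `p` and `f ^ j` also kills `w`, and it is associated to a power of `f`. -/
lemma aeval_apply_eq_zero_iff_pow_dvd (hf : Prime f) (hw : ∀ t, aeval A (f ^ t) w = 0 ↔ j ≤ t)
    (p : F[X]) : aeval A p w = 0 ↔ f ^ j ∣ p := by
  classical
  constructor
  · intro hp
    have hd : aeval A (EuclideanDomain.gcd p (f ^ j)) w = 0 := by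
      rw [EuclideanDomain.gcd_eq_gcd_ab, map_add, LinearMap.add_apply, mul_comm p,
        mul_comm (f ^ j), aeval_mul_apply, aeval_mul_apply, hp, (hw j).2 le_rfl,
        map_zero, map_zero, add_zero]
    obtain ⟨t, ht, hassoc⟩ := (dvd_prime_pow hf j).1 (EuclideanDomain.gcd_dvd_right p (f ^ j))
    obtain ⟨c, hc⟩ := hassoc.dvd
    have htj : t = j := le_antisymm ht <| (hw t).1 <| by
      rw [hc, mul_comm, aeval_mul_apply, hd, map_zero]
    exact (htj ▸ hassoc.symm.dvd).trans (EuclideanDomain.gcd_dvd_left p (f ^ j))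
  · rintro ⟨q, rfl⟩
    rw [mul_comm, aeval_mul_apply, (hw j).2 le_rfl, map_zero]

lemma finrank_range_aevalApply (hf : Prime f) (hw : ∀ t, aeval A (f ^ t) w = 0 ↔ j ≤ t) :
    Module.finrank F (LinearMap.range (aevalApply A w)) = j * f.natDegree := by
  have hker : LinearMap.ker (aevalApply A w) = (Ideal.span {f ^ j}).restrictScalars F := by
    ext p
    rw [LinearMap.mem_ker, Submodule.restrictScalars_mem, Ideal.mem_span_singleton,
      aevalApply_apply, aeval_apply_eq_zero_iff_pow_dvd hf hw]
  rw [← (LinearMap.quotKerEquivRange _).finrank_eq,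
    ((Submodule.quotEquivOfEq _ _ hker).trans
      (Submodule.Quotient.restrictScalarsEquiv F _)).finrank_eq,
    finrank_quotient_span_eq_natDegree, natDegree_pow]

end CyclicSubspace

section PrimaryCyclic

variable {F V : Type*} [Field F] [AddCommGroup V] [Module F V]
  {A : Module.End F V} {f : F[X]} {s : ℕ} {v₀ : V}

lemma exists_range_aevalApply_eq_top [FiniteDimensional F V] (hf : Irreducible f) (hs : 1 ≤ s)
    (hmin : minpoly F A = f ^ s) (hdim : Module.finrank F V = f.natDegree * s) :
    ∃ v₀ : V, LinearMap.range (aevalApply A v₀) = ⊤ ∧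
      ∀ t, aeval A (f ^ t) v₀ = 0 ↔ s ≤ t := by
  have hfs : aeval A (f ^ s) = 0 := hmin ▸ minpoly.aeval F A
  obtain ⟨v₀, hv₀⟩ : ∃ v₀, aeval A (f ^ (s - 1)) v₀ ≠ 0 := by
    by_contra! h
    have := minpoly.dvd F A (LinearMap.ext h)
    rw [hmin, pow_dvd_pow_iff hf.ne_zero hf.not_isUnit] at this
    omega
  have hexp : ∀ t, aeval A (f ^ t) v₀ = 0 ↔ s ≤ t := by
    refine fun t => ⟨fun ht => ?_, fun ht => ?_⟩
    · by_contra! hts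
      apply hv₀
      rw [show s - 1 = (s - 1 - t) + t by omega, pow_add, aeval_mul_apply, ht, map_zero]
    · rw [← Nat.sub_add_cancel ht, pow_add, map_mul, hfs, mul_zero, LinearMap.zero_apply]
  refine ⟨v₀, Submodule.eq_top_of_finrank_eq ?_, hexp⟩
  rw [finrank_range_aevalApply hf.prime hexp, hdim, mul_comm]

lemma finrank_range_aeval_pow (hf : Prime f) (hcyc : LinearMap.range (aevalApply A v₀) = ⊤)
    (hv₀ : ∀ t, aeval A (f ^ t) v₀ = 0 ↔ s ≤ t) {i : ℕ} (hi : i ≤ s) :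
    Module.finrank F (LinearMap.range (aeval A (f ^ i))) = (s - i) * f.natDegree := by
  have hexp : ∀ t, aeval A (f ^ t) (aeval A (f ^ i) v₀) = 0 ↔ s - i ≤ t := by
    intro t
    rw [← aeval_mul_apply, ← pow_add, hv₀]
    omega
  rw [← finrank_range_aevalApply hf hexp, ← aeval_comp_aevalApply, LinearMap.range_comp, hcyc,
    Submodule.map_top]

lemma exists_range_aevalApply_eq_range_aeval_pow [FiniteDimensional F V] (hf : Prime f)
    (hcyc : LinearMap.range (aevalApply A v₀) = ⊤) (hv₀ : ∀ t, aeval A (f ^ t) v₀ = 0 ↔ s ≤ t)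
    (w : V) :
    ∃ i ≤ s, LinearMap.range (aevalApply A w) = LinearMap.range (aeval A f ^ i) := by
  obtain ⟨p, rfl⟩ : ∃ p, aeval A p v₀ = w := hcyc ▸ Submodule.mem_top
  have hfs : aeval A (f ^ s) (aeval A p v₀) = 0 := by
    rw [← aeval_mul_apply, mul_comm, aeval_mul_apply, (hv₀ s).2 le_rfl, map_zero]
  obtain ⟨j, hjs, hw⟩ := exists_forall_aeval_pow_apply_eq_zero_iff hfs
  obtain ⟨q, rfl⟩ : f ^ (s - j) ∣ p := by
    have := (aeval_apply_eq_zero_iff_pow_dvd hf hv₀ (f ^ j * p)).1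
      (by rw [aeval_mul_apply]; exact (hw j).2 le_rfl)
    rwa [← Nat.add_sub_cancel' hjs, pow_add, mul_dvd_mul_iff_left (pow_ne_zero _ hf.ne_zero)]
      at this
  refine ⟨s - j, Nat.sub_le s j, ?_⟩
  rw [← map_pow]
  refine Submodule.eq_of_le_of_finrank_eq (range_aevalApply_le_of_mem_range A ?_) ?_
  · exact ⟨aeval A q v₀, by rw [aeval_mul_apply]⟩
  · rw [finrank_range_aevalApply hf hw, finrank_range_aeval_pow hf hcyc hv₀ (Nat.sub_le s j),
      Nat.sub_sub_self hjs]

end PrimaryCyclic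

theorem stmt8_general {F V : Type*} [Field F] [AddCommGroup V] [Module F V]
    [FiniteDimensional F V]
    (f : Polynomial F) (hf_irr : Irreducible f)
    (k s : ℕ) (hk : f.natDegree = k) (hs : 1 ≤ s)
    (hdim : Module.finrank F V = k * s)
    (A : Module.End F V)
    (hmin : minpoly F A = f ^ s)
    (v : V) (φ : Module.Dual F V) :
    (∀ m : ℕ, φ ((A ^ m) v) = 0) ↔
      ∃ i ≤ s, v ∈ LinearMap.range ((Polynomial.aeval A f) ^ i) ∧
        φ ∈ (LinearMap.range ((Polynomial.aeval A f) ^ i)).dualAnnihilator := by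
  subst hk
  obtain ⟨v₀, hcyc, hv₀⟩ := exists_range_aevalApply_eq_top hf_irr hs hmin hdim
  rw [← mem_dualAnnihilator_range_aevalApply_iff]
  constructor
  · intro hφ
    obtain ⟨i, hi, hU⟩ := exists_range_aevalApply_eq_range_aeval_pow hf_irr.prime hcyc hv₀ v
    exact ⟨i, hi, hU ▸ self_mem_range_aevalApply A v, hU ▸ hφ⟩
  · rintro ⟨i, -, hv, hφ⟩
    rw [← map_pow] at hv hφ
    exact Submodule.dualAnnihilator_anti (range_aevalApply_le_of_mem_range A hv) hφ

theorem stmt8 {F V : Type*} [Field F] [AddCommGroup V] [Module F V]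
    [FiniteDimensional F V]
    (f : Polynomial F) (hf_monic : f.Monic) (hf_irr : Irreducible f)
    (k s : ℕ) (hk : f.natDegree = k) (hs : 1 ≤ s)
    (hdim : Module.finrank F V = k * s)
    (A : Module.End F V)
    (hchar : A.charpoly = f ^ s) (hmin : minpoly F A = f ^ s)
    (v : V) (φ : Module.Dual F V) :
    (∀ m : ℕ, φ ((A ^ m) v) = 0) ↔
      ∃ i ≤ s, v ∈ LinearMap.range ((Polynomial.aeval A f) ^ i) ∧
        φ ∈ (LinearMap.range ((Polynomial.aeval A f) ^ i)).dualAnnihilator :=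
  stmt8_general f hf_irr k s hk hs hdim A hmin v φ
end

section
/- Let F be a field, f ∈ F[x] a monic irreducible polynomial of degree k, s ≥ 1, and V a vector space over F of dimension ks. Let A ∈ End(V) satisfy that both the characteristic polynomial and the minimal polynomial of A equal f^s, and let A^* ∈ End(V^*) denote the dual (adjoint) endomorphism of A. Suppose T : V → V^* is a linear isomorphism with T ∘ A = A^* ∘ T. Then for every 0 ≤ i ≤ s, T(f(A)^i V) = f(A^*)^i V^* = (f(A)^{s−i} V)^⊥, where for a subspace W ⊆ V, W^⊥ := {φ ∈ V^* : φ(w) = 0 for all w ∈ W}. -/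
open Polynomial LinearMap

private lemma dualMapPow {F V : Type*} [Field F] [AddCommGroup V] [Module F V]
    (A : Module.End F V) (n : ℕ) :
    ((A ^ n : Module.End F V)).dualMap = (A.dualMap : Module.End F (Module.Dual F V)) ^ n := by
  induction n with
  | zero => simp [Module.End.one_eq_id]
  | succ n ih =>
      rw [pow_succ', pow_succ, Module.End.mul_eq_comp, ← LinearMap.dualMap_comp_dualMap, ih,
        Module.End.mul_eq_comp]

private lemma aevalDualMap {F V : Type*} [Field F] [AddCommGroup V] [Module F V]
    (A : Module.End F V) (p : Polynomial F) :
    Polynomial.aeval (A.dualMap : Module.End F (Module.Dual F V)) p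
      = (Polynomial.aeval A p).dualMap := by
  induction p using Polynomial.induction_on' with
  | add p q hp hq =>
      rw [map_add, map_add, hp, hq]
      ext φ x
      simp [LinearMap.dualMap_apply]
  | monomial n a =>
      rw [Polynomial.aeval_monomial, Polynomial.aeval_monomial, ← dualMapPow]
      ext φ x
      simp [LinearMap.dualMap_apply, Module.algebraMap_end_apply]

theorem stmt11 {F V : Type*} [Field F] [AddCommGroup V] [Module F V]
    [FiniteDimensional F V]
    (f : Polynomial F) (hf_monic : f.Monic) (hf_irr : Irreducible f)
    (k s : ℕ) (hk : f.natDegree = k) (hs : 1 ≤ s)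
    (hdim : Module.finrank F V = k * s)
    (A : Module.End F V)
    (hchar : A.charpoly = f ^ s) (hmin : minpoly F A = f ^ s)
    (T : V ≃ₗ[F] Module.Dual F V)
    (hT : ∀ x : V, T (A x) = A.dualMap (T x)) :
    ∀ i ≤ s,
      Submodule.map (T : V →ₗ[F] Module.Dual F V)
          (LinearMap.range ((Polynomial.aeval A f) ^ i)) =
        LinearMap.range ((Polynomial.aeval (A.dualMap : Module.End F (Module.Dual F V)) f) ^ i) ∧
      LinearMap.range ((Polynomial.aeval (A.dualMap : Module.End F (Module.Dual F V)) f) ^ i) =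
        (LinearMap.range ((Polynomial.aeval A f) ^ (s - i))).dualAnnihilator := by
  classical
  set g : Module.End F V := Polynomial.aeval A f with hg
  -- basic facts about f
  have hfne : f ≠ 0 := hf_monic.ne_zero
  have hk1 : 1 ≤ k := by
    rcases Nat.eq_zero_or_pos k with h0 | h; swap
    · exact h
    exfalso
    exact hf_irr.not_isUnit (hf_monic.natDegree_eq_zero.mp (hk ▸ h0) ▸ isUnit_one)
  -- g ^ s = 0
  have hgs : g ^ s = 0 := by
    have := minpoly.aeval F A
    rw [hmin, map_pow] at this
    exact this
  -- g ^ (s-1) ≠ 0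
  have hgs1 : g ^ (s - 1) ≠ 0 := by
    intro h
    have h0 : Polynomial.aeval A (f ^ (s - 1)) = 0 := by rw [map_pow]; exact h
    have hdvd : minpoly F A ∣ f ^ (s - 1) := minpoly.dvd F A h0
    rw [hmin] at hdvd
    have hne : f ^ (s - 1) ≠ 0 := pow_ne_zero _ hfne
    have := Polynomial.natDegree_le_of_dvd hdvd hne
    rw [Polynomial.natDegree_pow, Polynomial.natDegree_pow, hk] at this
    obtain ⟨s', rfl⟩ : ∃ s', s = s' + 1 := ⟨s - 1, by omega⟩
    simp only [Nat.add_sub_cancel] at this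
    rw [add_mul, one_mul] at this
    omega
  -- pick a vector not killed by g^(s-1)
  obtain ⟨v, hv⟩ : ∃ v : V, (g ^ (s - 1)) v ≠ 0 := by
    by_contra h
    push_neg at h
    exact hgs1 (LinearMap.ext fun x => h x)
  -- the evaluation map at v
  set φ : Polynomial F →ₗ[F] V :=
    { toFun := fun p => Polynomial.aeval A p v
      map_add' := by intro p q; simp
      map_smul' := by intro c p; simp } with hφ
  have hφ_apply : ∀ p, φ p = Polynomial.aeval A p v := fun _ => rfl
  have hfprime : Prime f := hf_irr.prime
  -- the kernel of φ: killed polynomials are divisible by f^s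
  have hfs0 : Polynomial.aeval A (f ^ s) v = 0 := by
    rw [map_pow, hgs]; rfl
  have hmulkill : ∀ q r : Polynomial F, Polynomial.aeval A q v = 0 →
      Polynomial.aeval A (q * r) v = 0 := by
    intro q r hq
    rw [mul_comm, map_mul, Module.End.mul_apply, hq, map_zero]
  -- the kernel of φ: killed polynomials are divisible by f^s
  have hkill : ∀ p : Polynomial F, Polynomial.aeval A p v = 0 → f ^ s ∣ p := by
    intro p hp
    by_contra hnd
    have hbez := EuclideanDomain.gcd_eq_gcd_ab (f ^ s) p
    set d := EuclideanDomain.gcd (f ^ s) p with hd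
    have hdvdfs : d ∣ f ^ s := EuclideanDomain.gcd_dvd_left _ _
    obtain ⟨t, ht, hassoc⟩ := (dvd_prime_pow hfprime s).mp hdvdfs
    have hdkill : Polynomial.aeval A d v = 0 := by
      rw [hbez, map_add, LinearMap.add_apply, hmulkill _ _ hfs0, hmulkill _ _ hp, add_zero]
    have hftkill : Polynomial.aeval A (f ^ t) v = 0 := by
      obtain ⟨u, hud⟩ := hassoc
      rw [← hud]
      exact hmulkill _ _ hdkill
    have hts : t < s := by
      rcases lt_or_eq_of_le ht with h | h
      · exact h
      · exfalso
        apply hnd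
        have hfd : f ^ s ∣ d := by
          rw [h] at hassoc
          exact hassoc.symm.dvd
        exact hfd.trans (EuclideanDomain.gcd_dvd_right _ _)
    apply hv
    have hgsv : (g ^ (s - 1)) v = Polynomial.aeval A (f ^ (s - 1)) v := by rw [map_pow]
    rw [hgsv]
    have hsplit : f ^ (s - 1) = f ^ t * f ^ (s - 1 - t) := by
      rw [← pow_add]; congr 1; omega
    rw [hsplit]
    exact hmulkill _ _ hftkill
  have hkill' : ∀ p : Polynomial F, f ^ s ∣ p → Polynomial.aeval A p v = 0 := by
    rintro p ⟨q, rfl⟩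
    exact hmulkill _ _ hfs0
  -- surjectivity of φ
  have hsurj : ∀ w : V, ∃ p : Polynomial F, Polynomial.aeval A p v = w := by
    have hinj : Function.Injective (φ.comp (Polynomial.degreeLT F (k * s)).subtype) := by
      rw [← LinearMap.ker_eq_bot]
      rw [Submodule.eq_bot_iff]
      rintro ⟨p, hp⟩ hpk
      have hp0 : Polynomial.aeval A p v = 0 := hpk
      have hdvd := hkill p hp0
      have : p = 0 := by
        rcases eq_or_ne p 0 with h | h
        · exact h
        · exfalso
          have hdeg := Polynomial.natDegree_le_of_dvd hdvd h
          rw [Polynomial.natDegree_pow, hk, mul_comm s k] at hdeg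
          have hlt : p.natDegree < k * s := by
            have := Polynomial.mem_degreeLT.mp hp
            have h2 := Polynomial.degree_eq_natDegree h
            rw [h2] at this
            exact_mod_cast this
          omega
      simp [this]
    have hrange : LinearMap.range (φ.comp (Polynomial.degreeLT F (k * s)).subtype) = ⊤ := by
      apply Submodule.eq_top_of_finrank_eq
      rw [LinearMap.finrank_range_of_inj hinj]
      rw [hdim]
      have := (Polynomial.degreeLTEquiv F (k * s)).finrank_eq
      rw [this]
      simp [Module.finrank_fintype_fun_eq_card]
    intro w
    have : w ∈ LinearMap.range (φ.comp (Polynomial.degreeLT F (k * s)).subtype) := by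
      rw [hrange]; trivial
    obtain ⟨⟨p, _⟩, hp⟩ := this
    exact ⟨p, hp⟩
  -- key structural lemma : ker (g^i) = range (g^(s-i))
  have hker : ∀ i ≤ s, LinearMap.ker (g ^ i) = LinearMap.range (g ^ (s - i)) := by
    intro i hi
    apply le_antisymm
    · intro w hw
      obtain ⟨p, hp⟩ := hsurj w
      have hgw : ((g : Module.End F V) ^ i) w = 0 := hw
      have : Polynomial.aeval A (f ^ i * p) v = 0 := by
        rw [map_mul, map_pow, Module.End.mul_apply, hp]
        exact hgw
      have hdvd : f ^ s ∣ f ^ i * p := hkill _ this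
      have hdvd2 : f ^ (s - i) ∣ p := by
        have hsplit : f ^ s = f ^ i * f ^ (s - i) := by
          rw [← pow_add]; congr 1; omega
        rw [hsplit] at hdvd
        exact (mul_dvd_mul_iff_left (pow_ne_zero i hfne)).mp hdvd
      obtain ⟨q, hq⟩ := hdvd2
      refine ⟨Polynomial.aeval A q v, ?_⟩
      rw [← hp, hq, map_mul, map_pow, Module.End.mul_apply]
    · rintro w ⟨u, rfl⟩
      have : ((g : Module.End F V) ^ i) (((g : Module.End F V) ^ (s - i)) u)
          = ((g : Module.End F V) ^ s) u := by
        rw [← Module.End.mul_apply, ← pow_add]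
        congr 2
        omega
      show ((g : Module.End F V) ^ i) _ = 0
      rw [this, hgs]
      rfl
  -- dual side
  set D : Module.End F (Module.Dual F V) := Polynomial.aeval (A.dualMap) f with hDdef
  have hD : D = g.dualMap := aevalDualMap A f
  have hDpow : ∀ i : ℕ, (D : Module.End F (Module.Dual F V)) ^ i = ((g ^ i : Module.End F V)).dualMap := by
    intro i
    rw [hD, ← dualMapPow]
  -- commutation of T with polynomials in A
  have hTcomm : ∀ (n : ℕ) (x : V), T ((A ^ n) x) = ((A.dualMap : Module.End F (Module.Dual F V)) ^ n) (T x) := by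
    intro n
    induction n with
    | zero => intro x; simp
    | succ n ih =>
        intro x
        rw [pow_succ, pow_succ, Module.End.mul_apply, Module.End.mul_apply, ← hT x]
        exact ih (A x)
  have hTpoly : ∀ (p : Polynomial F) (x : V),
      T (Polynomial.aeval A p x) = (Polynomial.aeval (A.dualMap : Module.End F (Module.Dual F V)) p) (T x) := by
    intro p
    induction p using Polynomial.induction_on' with
    | add p q hp hq =>
        intro x
        rw [map_add, map_add, LinearMap.add_apply, LinearMap.add_apply, map_add, hp, hq]
    | monomial n a =>
        intro x
        rw [Polynomial.aeval_monomial, Polynomial.aeval_monomial]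
        simp only [Module.End.mul_apply, Module.algebraMap_end_apply, map_smul]
        rw [hTcomm n x]
  have hTg : ∀ (i : ℕ) (x : V), T ((g ^ i) x) = (D ^ i) (T x) := by
    intro i
    induction i with
    | zero => intro x; simp
    | succ i ih =>
        intro x
        rw [pow_succ, pow_succ, Module.End.mul_apply, Module.End.mul_apply, ih (g x)]
        congr 1
        exact hTpoly f x
  -- assemble
  intro i hi
  constructor
  · -- part 1
    apply le_antisymm
    · rintro ψ ⟨w, ⟨u, rfl⟩, rfl⟩
      exact ⟨T u, (hTg i u).symm⟩
    · rintro ψ ⟨χ, rfl⟩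
      obtain ⟨u, rfl⟩ := T.surjective χ
      exact ⟨(g ^ i) u, ⟨u, rfl⟩, hTg i u⟩
  · -- part 2
    rw [hDpow i, LinearMap.range_dualMap_eq_dualAnnihilator_ker, hker i hi]
end
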